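/- arXiv:2001.00992 — 2 statements merged into one kernel-verified Lean document; each statement's English description precedes it below -/
import Mathlib

section
/- Let G be a non-Hamiltonian graph with κ(G) = m(G) = s ≥ 2 and longest cycle C = u₁u₁⁺u₂u₂⁺⋯uₛuₛ⁺u₁ with x₀ outside C adjacent to all uᵢ. Then uᵢ⁺uⱼ ∈ E(G) for all i, j with 1 ≤ i, j ≤ s; that is, {u₁,...,uₛ} ∪ {u₁⁺,...,uₛ⁺} induces a subgraph containing the complete bipartite graph K_{s,s} between the uᵢ's and the uᵢ⁺'s. -/
/-!
Suppose `uᵢ⁺ uⱼ ∉ E(G)`. Every neighbour of `uᵢ⁺` is then some `u_k`. It is not `x₀`, since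
`x₀` could be inserted between `uᵢ` and `uᵢ⁺`; it is no `u_k⁺`, since the chord `uᵢ⁺ u_k⁺`
together with the edges `x₀ uᵢ₊₁`, `x₀ u_{k+1}` crosses into a cycle of length `2s + 1`; and it is
no other vertex `y` off `C`, since `y uᵢ⁺`, `x₀ uᵢ₊₁` and the `s - 1` cycle edges
`uᵢ₊₁⁺ uᵢ₊₂, …` would form a matching of size `s + 1`. Hence the `s - 1` vertices `u_k`, `k ≠ j`,
separate `uᵢ⁺` from `x₀`, contradicting `κ(G) = s`.
-/

open SimpleGraph Finset

/-- The matching number of a graph: the largest size of a matching. -/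
noncomputable def matchingNumber {V : Type*} [Fintype V] (G : SimpleGraph V) : ℕ :=
  sSup {n | ∃ M : G.Subgraph, M.IsMatching ∧ M.edgeSet.ncard = n}

/-- The vertex connectivity of a finite graph: the least size of a set `S` of vertices
whose removal either disconnects the graph or leaves at most one vertex. -/
noncomputable def vertexConnectivity {V : Type*} [Fintype V] (G : SimpleGraph V) : ℕ :=
  sInf {k | ∃ S : Finset V, S.card = k ∧
    (¬ (G.induce ((↑S : Set V)ᶜ)).Connected ∨ Fintype.card V ≤ k + 1)}

/-- `b` is the successor of `a` along the closed walk `c` (with its fixed orientation). -/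
def IsCycleSucc {V : Type*} {G : SimpleGraph V} {v : V} (c : G.Walk v v) (a b : V) : Prop :=
  ∃ k < c.length, c.getVert k = a ∧ c.getVert (k + 1) = b

/-- The family `F` of graphs `H` with `K_{p,q} ⊆ H ⊆ K_p ∨ (q·K_1)` for some `q ≥ p + 1 ≥ 3`:
the vertices split into a set `P` of size `p ≥ 2` and a set `Q` of size `q ≥ p + 1` such that
all `P`–`Q` edges are present and `Q` is independent. -/
def inFamilyF {V : Type*} [Fintype V] [DecidableEq V] (G : SimpleGraph V) : Prop :=
  ∃ P Q : Finset V, P ∪ Q = Finset.univ ∧ Disjoint P Q ∧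
    Q.card ≥ P.card + 1 ∧ P.card ≥ 2 ∧
    (∀ a ∈ P, ∀ b ∈ Q, G.Adj a b) ∧
    (∀ a ∈ Q, ∀ b ∈ Q, ¬ G.Adj a b)

namespace SimpleGraph

variable {V : Type*} {G : SimpleGraph V}

theorem exists_isCycle_of_injOn {n : ℕ} (hn : 3 ≤ n) (f : ℕ → V)
    (hf : Set.InjOn f (Set.Iio n))
    (hadj : ∀ k, k + 1 < n → G.Adj (f k) (f (k + 1))) (hclose : G.Adj (f (n - 1)) (f 0)) :
    ∃ (w : V) (p : G.Walk w w), p.IsCycle ∧ p.length = n := by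
  have hedge (a b : Fin n) (h : (a - b).val = 1) : G.Adj (f a) (f b) := by
    rcases le_or_gt b a with hba | hab
    · rw [Fin.coe_sub_iff_le.mpr hba] at h
      rw [show (a : ℕ) = b + 1 by omega]
      exact (hadj b (by omega)).symm
    · rw [Fin.coe_sub_iff_lt.mpr hab] at h
      rw [show (a : ℕ) = 0 by omega, show (b : ℕ) = n - 1 by omega]
      exact hclose.symm
  refine (cycleGraph_isContained_iff (by omega)).mp
    ⟨⟨⟨fun k => f k, fun {a b} hab => ?_⟩, fun a b h => Fin.ext (hf a.2 b.2 h)⟩⟩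
  rcases cycleGraph_adj'.mp hab with h | h
  · exact hedge a b h
  · exact (hedge b a h).symm

theorem exists_isMatching_of_injOn (f : ℕ → V) (k : ℕ) (hf : Set.InjOn f (Set.Iio (2 * k)))
    (hadj : ∀ j < k, G.Adj (f (2 * j)) (f (2 * j + 1))) :
    ∃ M : G.Subgraph, M.IsMatching ∧ M.edgeSet.ncard = k := by
  have hf' {a b : ℕ} (ha : a < 2 * k) (hb : b < 2 * k) (h : f a = f b) : a = b := hf ha hb h
  refine ⟨⨆ j : Fin k, G.subgraphOfAdj (hadj j j.2),
    Subgraph.IsMatching.iSup (fun _ => .subgraphOfAdj _) fun i j hij => ?_, ?_⟩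
  · have := Fin.val_ne_of_ne hij
    simp only [support_subgraphOfAdj, Set.disjoint_left, Set.mem_insert_iff,
      Set.mem_singleton_iff]
    rintro _ (rfl | rfl) (h | h) <;> have := hf' (by omega) (by omega) h <;> omega
  · rw [Subgraph.edgeSet_iSup]
    simp only [edgeSet_subgraphOfAdj]
    rw [Set.iUnion_singleton_eq_range, Set.ncard_range_of_injective, Nat.card_eq_fintype_card,
      Fintype.card_fin]
    intro i j h
    rcases Sym2.eq_iff.mp h with ⟨h, -⟩ | ⟨h, -⟩ <;>
      have := hf' (by omega) (by omega) h <;> exact Fin.ext (by omega)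

lemma le_matchingNumber [Fintype V] {M : G.Subgraph} (hM : M.IsMatching) :
    M.edgeSet.ncard ≤ matchingNumber G :=
  le_csSup ⟨Nat.card (Sym2 V), by rintro _ ⟨M', -, rfl⟩; exact Set.ncard_le_card _⟩ ⟨M, hM, rfl⟩

lemma vertexConnectivity_le_card_of_forall_adj_mem [Fintype V] {S : Finset V} {a b : V}
    (ha : a ∉ S) (hb : b ∉ S) (hab : a ≠ b) (hS : ∀ y, G.Adj a y → y ∈ S) :
    vertexConnectivity G ≤ S.card := by
  refine Nat.sInf_le ⟨S, rfl, Or.inl fun hconn => ?_⟩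
  obtain ⟨p⟩ := hconn.preconnected ⟨a, ha⟩ ⟨b, hb⟩
  cases p with
  | nil => exact hab rfl
  | @cons _ y _ h _ => exact y.prop (hS _ (induce_adj.mp h))

end SimpleGraph

namespace SimpleGraph.Walk

variable {V : Type*} {G : SimpleGraph V} {v : V}

def cycleVert (c : G.Walk v v) (k : ℕ) : V := c.getVert (k % c.length)

def IsLongestCycle (c : G.Walk v v) : Prop :=
  c.IsCycle ∧ ∀ (w : V) (d : G.Walk w w), d.IsCycle → d.length ≤ c.length

variable {c : G.Walk v v}

lemma cycleVert_eq_getVert {k : ℕ} (hk : k ≤ c.length) : c.cycleVert k = c.getVert k := by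
  rcases hk.lt_or_eq with hk | rfl
  · rw [cycleVert, Nat.mod_eq_of_lt hk]
  · rw [cycleVert, Nat.mod_self, getVert_zero, getVert_length]

@[simp]
lemma cycleVert_mod (k : ℕ) : c.cycleVert (k % c.length) = c.cycleVert k := by
  simp [cycleVert]

@[simp]
lemma cycleVert_add_length (k : ℕ) : c.cycleVert (k + c.length) = c.cycleVert k := by
  simp [cycleVert]

lemma cycleVert_mod_add_one (k : ℕ) : c.cycleVert (k % c.length + 1) = c.cycleVert (k + 1) := by
  rw [← cycleVert_mod, Nat.mod_add_mod, cycleVert_mod]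

lemma adj_cycleVert_succ (h : 0 < c.length) (k : ℕ) :
    G.Adj (c.cycleVert k) (c.cycleVert (k + 1)) := by
  have hk : k % c.length < c.length := Nat.mod_lt _ h
  rw [← cycleVert_mod, ← cycleVert_mod_add_one, cycleVert_eq_getVert hk.le,
    cycleVert_eq_getVert hk]
  exact c.adj_getVert_succ hk

lemma cycleVert_two_mul_mod {s : ℕ} (hlen : c.length = 2 * s) (m : ℕ) :
    c.cycleVert (2 * (m % s)) = c.cycleVert (2 * m) := by
  conv_rhs => rw [← cycleVert_mod, hlen, Nat.mul_mod_mul_left]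

lemma cycleVert_mem_support (k : ℕ) : c.cycleVert k ∈ c.support := c.getVert_mem_support _

lemma exists_cycleVert_eq_of_mem_support {w : V} (hw : w ∈ c.support) :
    ∃ k, c.cycleVert k = w := by
  obtain ⟨k, rfl, hk⟩ := mem_support_iff_exists_getVert.mp hw
  exact ⟨k, cycleVert_eq_getVert hk⟩

lemma IsCycle.cycleVert_injOn (hc : c.IsCycle) (a : ℕ) :
    Set.InjOn c.cycleVert (Set.Ico a (a + c.length)) := by
  intro k hk l hl h
  simp only [Set.mem_Ico] at hk hl
  have h3 := hc.three_le_length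
  have hmod : k % c.length = l % c.length := hc.getVert_injOn'
    (by simp only [Set.mem_ofPred_eq]; have := Nat.mod_lt k (by omega : 0 < c.length); omega)
    (by simp only [Set.mem_ofPred_eq]; have := Nat.mod_lt l (by omega : 0 < c.length); omega) h
  rcases le_total k l with hkl | hlk
  · have := Nat.mod_eq_of_lt (by omega : l - k < c.length)
    rw [Nat.sub_mod_eq_zero_of_mod_eq hmod.symm] at this
    omega
  · have := Nat.mod_eq_of_lt (by omega : k - l < c.length)
    rw [Nat.sub_mod_eq_zero_of_mod_eq hmod] at this
    omega

variable {x : V}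

lemma IsCycle.injOn_ite_cycleVert (hc : c.IsCycle) (hx : x ∉ c.support) {g : ℕ → ℕ}
    {a n : ℕ} (hg : Set.MapsTo g (Set.Icc 1 n) (Set.Ico a (a + c.length)))
    (hg_inj : Set.InjOn g (Set.Icc 1 n)) :
    Set.InjOn (fun m => if m = 0 then x else c.cycleVert (g m)) (Set.Iio (n + 1)) := by
  intro m₁ h₁ m₂ h₂ h
  simp only [Set.mem_Iio] at h₁ h₂
  have hne (k : ℕ) : x ≠ c.cycleVert k := fun h => hx (h ▸ cycleVert_mem_support k)
  have hmem {m : ℕ} (hm0 : m ≠ 0) (hm : m < n + 1) : m ∈ Set.Icc 1 n := ⟨by omega, by omega⟩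
  dsimp only at h
  split_ifs at h with hm₁ hm₂ hm₂
  · omega
  · exact (hne _ h).elim
  · exact (hne _ h.symm).elim
  · exact hg_inj (hmem hm₁ h₁) (hmem hm₂ h₂)
      (hc.cycleVert_injOn a (hg (hmem hm₁ h₁)) (hg (hmem hm₂ h₂)) h)

lemma IsCycle.exists_isCycle_length_succ (hc : c.IsCycle) (hx : x ∉ c.support) {g : ℕ → ℕ}
    {a : ℕ} (hg : Set.MapsTo g (Set.Icc 1 c.length) (Set.Ico a (a + c.length)))
    (hg_inj : Set.InjOn g (Set.Icc 1 c.length))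
    (hstep : ∀ m, 1 ≤ m → m < c.length → G.Adj (c.cycleVert (g m)) (c.cycleVert (g (m + 1))))
    (hfirst : G.Adj x (c.cycleVert (g 1))) (hlast : G.Adj x (c.cycleVert (g c.length))) :
    ∃ (w : V) (d : G.Walk w w), d.IsCycle ∧ d.length = c.length + 1 := by
  have h3 := hc.three_le_length
  refine exists_isCycle_of_injOn (by omega) _ (hc.injOn_ite_cycleVert hx hg hg_inj) ?_ ?_
  · intro m hm
    rcases Nat.eq_zero_or_pos m with rfl | hm0
    · simpa using hfirst
    · simpa [hm0.ne'] using hstep m hm0 (by omega)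
  · simpa [hc.not_nil] using hlast.symm

lemma IsLongestCycle.not_adj_cycleVert_succ (hc : c.IsLongestCycle) (hx : x ∉ c.support)
    {k : ℕ} (hk : G.Adj x (c.cycleVert k)) : ¬ G.Adj x (c.cycleVert (k + 1)) := by
  intro hk'
  have h3 := hc.1.three_le_length
  obtain ⟨w, d, hd, hlen⟩ := hc.1.exists_isCycle_length_succ hx (g := (k + ·)) (a := k + 1)
    (fun m hm => by simp only [Set.mem_Icc, Set.mem_Ico] at hm ⊢; omega)
    (fun m₁ _ m₂ _ h => by simpa using h)
    (fun m _ _ => by simpa [← add_assoc] using adj_cycleVert_succ (by omega) (k + m))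
    hk' (by simpa using hk)
  have := hc.2 w d hd
  omega

lemma IsLongestCycle.not_adj_cycleVert_of_lt (hc : c.IsLongestCycle) (hx : x ∉ c.support)
    {p q : ℕ} (hpq : p < q) (hqp : q < p + c.length) (hp : G.Adj x (c.cycleVert (p + 1)))
    (hq : G.Adj x (c.cycleVert (q + 1))) : ¬ G.Adj (c.cycleVert p) (c.cycleVert q) := by
  intro hpq'
  have hpos : 0 < c.length := by omega
  -- the path `c (p+1), …, c q, c p, c (p-1), …, c (q+1)` through all vertices of the cycle
  let g : ℕ → ℕ := fun m => if m ≤ q - p then p + m else q + c.length + 1 - m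
  obtain ⟨w, d, hd, hlen⟩ := hc.1.exists_isCycle_length_succ hx (g := g) (a := p + 1)
    (fun m hm => by simp only [g, Set.mem_Icc, Set.mem_Ico] at hm ⊢; split_ifs <;> omega)
    (fun m₁ h₁ m₂ h₂ h => by
      simp only [g, Set.mem_Icc] at h₁ h₂ h; split_ifs at h <;> omega)
    (fun m _ hm => by
      simp only [g]
      split_ifs with h₁ h₂ h₂
      · simpa [← add_assoc] using adj_cycleVert_succ hpos (p + m)
      · rw [show q + c.length + 1 - (m + 1) = p + c.length by omega, cycleVert_add_length,
          show p + m = q by omega]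
        exact hpq'.symm
      · omega
      · rw [show q + c.length + 1 - m = q + c.length + 1 - (m + 1) + 1 by omega]
        exact (adj_cycleVert_succ hpos _).symm)
    (by simpa [g, show 1 ≤ q - p by omega] using hp)
    (by simp only [g, if_neg (show ¬ c.length ≤ q - p by omega)]
        rwa [show q + c.length + 1 - c.length = q + 1 by omega])
  have := hc.2 w d hd
  omega

lemma IsLongestCycle.not_adj_cycleVert_of_adj_succ (hc : c.IsLongestCycle) (hx : x ∉ c.support)
    {p q : ℕ} (hp : G.Adj x (c.cycleVert (p + 1))) (hq : G.Adj x (c.cycleVert (q + 1))) :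
    ¬ G.Adj (c.cycleVert p) (c.cycleVert q) := by
  have hpos : 0 < c.length := by have := hc.1.three_le_length; omega
  have hp' := Nat.mod_lt p hpos
  have hq' := Nat.mod_lt q hpos
  rw [← cycleVert_mod_add_one] at hp hq
  rw [← cycleVert_mod p, ← cycleVert_mod q]
  rcases lt_trichotomy (p % c.length) (q % c.length) with h | h | h
  · exact hc.not_adj_cycleVert_of_lt hx h (by omega) hp hq
  · rw [h]
    exact G.irrefl
  · exact fun hadj => hc.not_adj_cycleVert_of_lt hx h (by omega) hq hp hadj.symm

lemma IsCycle.exists_isMatching_of_adj_of_adj_succ (hc : c.IsCycle) {s : ℕ}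
    (hlen : c.length = 2 * s) {x y : V} (hx : x ∉ c.support) (hy : y ∉ c.support) (hxy : x ≠ y)
    {k : ℕ} (hyk : G.Adj y (c.cycleVert k)) (hxk : G.Adj x (c.cycleVert (k + 1))) :
    ∃ M : G.Subgraph, M.IsMatching ∧ M.edgeSet.ncard = s + 1 := by
  have hpos : 0 < c.length := by have := hc.three_le_length; omega
  have hne (z : V) (hz : z ∉ c.support) (l : ℕ) : z ≠ c.cycleVert l :=
    fun h => hz (h ▸ cycleVert_mem_support l)
  -- matched pairs `(y, c k)`, `(x, c (k+1))`, `(c (k+2), c (k+3))`, …, `(c (k+2s-2), c (k+2s-1))`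
  refine exists_isMatching_of_injOn
    (fun m => if m = 0 then y else if m = 1 then c.cycleVert k else if m = 2 then x
      else c.cycleVert (k + m - 2)) (s + 1) ?_ fun j hj => ?_
  · intro m₁ h₁ m₂ h₂ h
    simp only [Set.mem_Iio] at h₁ h₂
    have hinj := hc.cycleVert_injOn k
    dsimp only at h
    split_ifs at h <;> first
      | omega
      | exact (hxy h).elim
      | exact (hxy h.symm).elim
      | exact (hne _ ‹_› _ h).elim
      | exact (hne _ ‹_› _ h.symm).elim
      | (have := hinj ⟨by omega, by omega⟩ ⟨by omega, by omega⟩ h; omega)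
  · rcases (by omega : j = 0 ∨ j = 1 ∨ 2 ≤ j) with rfl | rfl | hj2
    · simpa using hyk
    · simpa using hxk
    · rw [if_neg (by omega), if_neg (by omega), if_neg (by omega), if_neg (by omega),
        if_neg (by omega), if_neg (by omega), show k + (2 * j + 1) - 2 = k + 2 * j - 2 + 1 by omega]
      exact adj_cycleVert_succ hpos _

lemma IsLongestCycle.exists_eq_cycleVert_two_mul_of_adj [Fintype V] (hc : c.IsLongestCycle)
    {s : ℕ} (hlen : c.length = 2 * s) (hmatch : matchingNumber G ≤ s) (hx : x ∉ c.support)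
    (hxc : ∀ m, G.Adj x (c.cycleVert (2 * m))) {k : ℕ} {y : V}
    (hy : G.Adj (c.cycleVert (2 * k + 1)) y) : ∃ m, y = c.cycleVert (2 * m) := by
  have hxc' (m : ℕ) : G.Adj x (c.cycleVert (2 * m + 1 + 1)) := hxc (m + 1)
  by_cases hyc : y ∈ c.support
  · obtain ⟨q, rfl⟩ := exists_cycleVert_eq_of_mem_support hyc
    obtain ⟨m, rfl | rfl⟩ := Nat.even_or_odd' q
    · exact ⟨m, rfl⟩
    · exact (hc.not_adj_cycleVert_of_adj_succ hx (hxc' k) (hxc' m) hy).elim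
  · by_cases hyx : y = x
    · subst hyx
      exact (hc.not_adj_cycleVert_succ hx (hxc k) hy.symm).elim
    · obtain ⟨M, hM, hcard⟩ :=
        hc.1.exists_isMatching_of_adj_of_adj_succ hlen hx hyc (Ne.symm hyx) hy.symm (hxc' k)
      have := le_matchingNumber hM
      omega

lemma IsLongestCycle.vertexConnectivity_lt_of_not_adj [Fintype V] [DecidableEq V]
    (hc : c.IsLongestCycle) {s : ℕ} (hlen : c.length = 2 * s) (hmatch : matchingNumber G ≤ s)
    (hx : x ∉ c.support) (hxc : ∀ m, G.Adj x (c.cycleVert (2 * m))) {k l : ℕ} (hk : k < s)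
    (hkl : ¬ G.Adj (c.cycleVert (2 * k + 1)) (c.cycleVert (2 * l))) :
    vertexConnectivity G < s := by
  have hs : 0 < s := by have := hc.1.three_le_length; omega
  let S := ((range s).erase (l % s)).image fun m => c.cycleVert (2 * m)
  have hS : ∀ y, G.Adj (c.cycleVert (2 * k + 1)) y → y ∈ S := by
    intro y hy
    obtain ⟨m, rfl⟩ := hc.exists_eq_cycleVert_two_mul_of_adj hlen hmatch hx hxc hy
    rw [← cycleVert_two_mul_mod hlen] at hy ⊢
    refine mem_image_of_mem _ (mem_erase.mpr ⟨fun h => hkl ?_, mem_range.mpr (Nat.mod_lt m hs)⟩)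
    rwa [← cycleVert_two_mul_mod hlen l, ← h]
  have hkS : c.cycleVert (2 * k + 1) ∉ S := by
    simp only [S, mem_image, mem_erase, mem_range, not_exists, not_and]
    intro m ⟨_, hm⟩ h
    have := hc.1.cycleVert_injOn 0 (by simp; omega) (by simp; omega) h
    omega
  have hxS : x ∉ S := by
    simp only [S, mem_image, not_exists, not_and]
    exact fun m _ h => hx (h ▸ cycleVert_mem_support _)
  have hkx : c.cycleVert (2 * k + 1) ≠ x := fun h => hx (h ▸ cycleVert_mem_support _)
  calc vertexConnectivity G
      ≤ S.card := vertexConnectivity_le_card_of_forall_adj_mem hkS hxS hkx hS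
    _ ≤ s - 1 := card_image_le.trans (by simp [card_erase_of_mem, Nat.mod_lt l hs])
    _ < s := by omega

end SimpleGraph.Walk

theorem stmt_6_general {V : Type*} [Fintype V] [DecidableEq V] (G : SimpleGraph V)
    (s : ℕ) (hs : 2 ≤ s)
    (hκ : vertexConnectivity G = s) (hm : matchingNumber G = s)
    {v : V} (c : G.Walk v v) (hc : c.IsCycle)
    (hlong : ∀ (w : V) (d : G.Walk w w), d.IsCycle → d.length ≤ c.length)
    (hlen : c.length = 2 * s)
    (u usucc : Fin s → V)
    (hu : ∀ i : Fin s, c.getVert (2 * ↑i) = u i)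
    (husucc : ∀ i : Fin s, c.getVert (2 * ↑i + 1) = usucc i)
    (x₀ : V) (hx₀ : x₀ ∉ c.support)
    (hadj : ∀ i, G.Adj x₀ (u i)) :
    ∀ i j : Fin s, G.Adj (usucc i) (u j) := by
  have hu' (i : Fin s) : c.cycleVert (2 * i) = u i := by
    rw [Walk.cycleVert_eq_getVert (by omega), hu]
  have husucc' (i : Fin s) : c.cycleVert (2 * i + 1) = usucc i := by
    rw [Walk.cycleVert_eq_getVert (by omega), husucc]
  have hx₀c (m : ℕ) : G.Adj x₀ (c.cycleVert (2 * m)) := by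
    rw [← Walk.cycleVert_two_mul_mod hlen, hu' ⟨m % s, Nat.mod_lt m (by omega)⟩]
    exact hadj _
  intro i j
  by_contra hij
  rw [← hu', ← husucc'] at hij
  have := Walk.IsLongestCycle.vertexConnectivity_lt_of_not_adj ⟨hc, hlong⟩ hlen hm.le hx₀ hx₀c
    i.2 hij
  omega

/-- `uᵢ⁺ uⱼ ∈ E(G)` for all `i, j`: the `uᵢ`'s and the `uᵢ⁺`'s induce a subgraph
containing the complete bipartite graph `K_{s,s}`. -/
theorem stmt_6 {V : Type*} [Fintype V] [DecidableEq V] (G : SimpleGraph V)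
    (hnotham : ¬ G.IsHamiltonian)
    (s : ℕ) (hs : 2 ≤ s)
    (hκ : vertexConnectivity G = s) (hm : matchingNumber G = s)
    {v : V} (c : G.Walk v v) (hc : c.IsCycle)
    (hlong : ∀ (w : V) (d : G.Walk w w), d.IsCycle → d.length ≤ c.length)
    (hlen : c.length = 2 * s)
    (u usucc : Fin s → V)
    (hu : ∀ i : Fin s, c.getVert (2 * ↑i) = u i)
    (husucc : ∀ i : Fin s, c.getVert (2 * ↑i + 1) = usucc i)
    (x₀ : V) (hx₀ : x₀ ∉ c.support)
    (hadj : ∀ i, G.Adj x₀ (u i)) :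
    ∀ i j : Fin s, G.Adj (usucc i) (u j) :=
  stmt_6_general G s hs hκ hm c hc hlong hlen u usucc hu husucc x₀ hx₀ hadj
end

section
/- If G is a graph with κ(G) ≥ 2 and m(G) < κ(G) (strict inequality), then G is Hamiltonian. -/
open SimpleGraph Finset

/-!
Every vertex has degree at least `κ(G) ≥ m(G) + 1`. A maximum matching `M` then leaves at most
one vertex uncovered: two uncovered vertices `u`, `w` have all their neighbours covered by `M`,
and no edge `xy` of `M` has `u ~ x` and `w ~ y` (that would be an augmenting path), so the
`M`-partners of the neighbours of `u` and the neighbours of `w` are disjoint sets of covered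
vertices, whence `deg u + deg w ≤ 2 m(G)`. Hence `n ≤ 2 m(G) + 1 < 2 δ(G)`, and
`n ≥ κ(G) + 1 ≥ 3`, so Dirac's theorem applies.
-/

theorem Cycle.Chain.exists_cons_isChain {α : Type*} {r : α → α → Prop} {l : List α} {z : α}
    (hc : Cycle.Chain r (l : Cycle α)) (hz : z ∈ l) :
    ∃ t, z :: t ~r l ∧ (z :: t).IsChain r := by
  obtain ⟨s, t, rfl⟩ := List.append_of_mem hz
  have hrot : z :: (t ++ s) ~r s ++ z :: t := List.isRotated_append (l := z :: t)
  refine ⟨t ++ s, hrot, ?_⟩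
  rw [← Cycle.coe_eq_coe.mpr hrot, Cycle.chain_coe_cons, ← List.cons_append] at hc
  exact hc.left_of_append

namespace SimpleGraph

variable {V : Type*} {G : SimpleGraph V}

theorem isHamiltonian_of_cycleChain [Fintype V] [DecidableEq V] {l : List V} (hnd : l.Nodup)
    (hspan : ∀ v, v ∈ l) (hlen : 3 ≤ l.length) (hc : Cycle.Chain G.Adj (l : Cycle V)) :
    G.IsHamiltonian := by
  have hne : l ≠ [] := List.ne_nil_of_length_pos (by omega)
  obtain ⟨hclose, hchain⟩ := List.isChain_cons.mp ((Cycle.chain_ne_nil G.Adj hne).mp hc)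
  let p := Walk.cons (hclose _ (List.head?_eq_some_head hne)) (Walk.ofSupport l hne hchain)
  have htail : p.tail.support = l := by simp [p]
  have hplen : p.length = l.length := by
    simp only [Walk.length_cons, Walk.length_ofSupport, p]
    omega
  have htailPath : p.tail.IsPath := by rwa [Walk.isPath_def, htail]
  refine fun _ => ⟨_, p, ?_, ?_⟩
  · exact Walk.isCycle_iff_isPath_tail_and_le_length.mpr ⟨htailPath, hplen ▸ hlen⟩
  · exact htailPath.isHamiltonian_of_mem fun v => by rw [htail]; exact hspan v

theorem cycleChain_take_append_reverse_drop {l : List V} (hne : l ≠ []) (hc : l.IsChain G.Adj)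
    {i : ℕ} (hi : i + 1 < l.length) (ha : G.Adj (l.head hne) l[i + 1])
    (hb : G.Adj (l.getLast hne) l[i]) :
    Cycle.Chain G.Adj ↑(l.take (i + 1) ++ (l.drop (i + 1)).reverse) := by
  have hdrop : l.drop (i + 1) ≠ [] := by
    simp only [ne_eq, List.drop_eq_nil_iff, not_le]
    exact hi
  have hne' : l.take (i + 1) ++ (l.drop (i + 1)).reverse ≠ [] := by simp [hne]
  have hlast : (l.take (i + 1) ++ (l.drop (i + 1)).reverse).getLast hne' = l[i + 1] := by
    rw [List.getLast_append_of_ne_nil _ (by simpa using hdrop), List.getLast_reverse,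
      List.head_drop]
  rw [Cycle.chain_ne_nil _ hne', List.isChain_cons, List.isChain_append, List.isChain_reverse,
    hlast]
  refine ⟨?_, hc.take _, (hc.drop _).imp fun _ _ h => h.symm, ?_⟩
  · simp [List.head?_take, List.head?_eq_some_head hne, ha.symm]
  · simp [List.getLast?_take, List.getLast?_drop, List.getLast?_eq_some_getLast hne,
      List.getElem?_eq_getElem (Nat.lt_of_succ_lt hi), hb.symm]

theorem exists_adj_getElem_succ_adj_getElem [Fintype V] [DecidableRel G.Adj] {l : List V}
    (hne : l ≠ []) (ha : ∀ x, G.Adj (l.head hne) x → x ∈ l)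
    (hb : ∀ x, G.Adj (l.getLast hne) x → x ∈ l)
    (hdeg : l.length ≤ G.degree (l.head hne) + G.degree (l.getLast hne)) :
    ∃ i, ∃ hi : i + 1 < l.length,
      G.Adj (l.head hne) l[i + 1] ∧ G.Adj (l.getLast hne) l[i] := by
  classical
  set a := l.head hne
  set b := l.getLast hne
  have hlen : 0 < l.length := List.length_pos_iff.mpr hne
  let A := (range (l.length - 1)).filter fun i => G.Adj a (l.getD (i + 1) a)
  let B := (range (l.length - 1)).filter fun i => G.Adj b (l.getD i a)
  have hA : G.degree a ≤ #A := by
    rw [← card_neighborFinset_eq_degree]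
    refine card_le_card_of_surjOn (fun i => l.getD (i + 1) a) fun x hx => ?_
    rw [coe_neighborFinset, mem_neighborSet] at hx
    obtain ⟨j, hj, rfl⟩ := List.getElem_of_mem (ha _ hx)
    have hj0 : j ≠ 0 := by
      rintro rfl
      exact G.ne_of_adj hx (List.head_eq_getElem hne)
    have hj' : j - 1 + 1 = j := Nat.sub_add_cancel (Nat.pos_of_ne_zero hj0)
    refine ⟨j - 1, ?_, by simp only [hj', List.getD_eq_getElem _ _ hj]⟩
    rw [mem_coe, mem_filter, mem_range, hj', List.getD_eq_getElem _ _ hj]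
    exact ⟨by omega, hx⟩
  have hB : G.degree b ≤ #B := by
    rw [← card_neighborFinset_eq_degree]
    refine card_le_card_of_surjOn (fun i => l.getD i a) fun x hx => ?_
    rw [coe_neighborFinset, mem_neighborSet] at hx
    obtain ⟨j, hj, rfl⟩ := List.getElem_of_mem (hb _ hx)
    have hjl : j ≠ l.length - 1 := by
      rintro rfl
      exact G.ne_of_adj hx (List.getLast_eq_getElem hne)
    refine ⟨j, ?_, by simp only [List.getD_eq_getElem _ _ hj]⟩
    rw [mem_coe, mem_filter, mem_range, List.getD_eq_getElem _ _ hj]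
    exact ⟨by omega, hx⟩
  obtain ⟨i, hi⟩ := inter_nonempty_of_card_lt_card_add_card (t := A) (u := B)
    (filter_subset _ _) (filter_subset _ _) (by rw [card_range]; omega)
  simp only [A, B, mem_inter, mem_filter, mem_range] at hi
  rw [List.getD_eq_getElem _ _ (by omega), List.getD_eq_getElem _ _ (by omega)] at hi
  exact ⟨i, by omega, hi.1.2, hi.2.2⟩

theorem reachable_of_card_le_degree_add_degree [Fintype V] [DecidableRel G.Adj] {u v : V}
    (h : Fintype.card V ≤ G.degree u + G.degree v) : G.Reachable u v := by
  classical
  by_cases huv : u = v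
  · exact huv ▸ Reachable.refl u
  by_cases hadj : G.Adj u v
  · exact hadj.reachable
  have hsub : ∀ x y, ¬ G.Adj x y → G.neighborFinset x ⊆ (univ.erase x).erase y := by
    intro x y hxy w hw
    rw [mem_neighborFinset] at hw
    simp only [mem_erase, mem_univ, and_true]
    exact ⟨by rintro rfl; exact hxy hw, (G.ne_of_adj hw).symm⟩
  have hcard : #((univ.erase u).erase v) + 2 = Fintype.card V := by
    rw [card_erase_of_mem (by simp [Ne.symm huv]), card_erase_of_mem (mem_univ _), card_univ]
    have : 2 ≤ Fintype.card V := Fintype.one_lt_card_iff.mpr ⟨u, v, huv⟩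
    omega
  obtain ⟨w, hw⟩ := inter_nonempty_of_card_lt_card_add_card (hsub u v hadj)
    (erase_right_comm (a := u) (b := v) ▸ hsub v u (hadj ·.symm))
    (by rw [card_neighborFinset_eq_degree, card_neighborFinset_eq_degree]; omega)
  rw [mem_inter, mem_neighborFinset, mem_neighborFinset] at hw
  exact hw.1.reachable.trans hw.2.symm.reachable

theorem mem_of_adj_head_of_length_le {l l' : List V}
    (hmax : ∀ l'' : List V, l''.Nodup → l''.IsChain G.Adj → l''.length ≤ l.length)
    (hnd : l'.Nodup) (hc : l'.IsChain G.Adj) (hlen : l.length ≤ l'.length) {x : V}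
    (hx : ∀ y ∈ l'.head?, G.Adj x y) : x ∈ l' := by
  by_contra hxl
  have := hmax (x :: l') (List.nodup_cons.mpr ⟨hxl, hnd⟩) (List.isChain_cons.mpr ⟨hx, hc⟩)
  simp only [List.length_cons] at this
  omega

theorem forall_mem_of_cycleChain_of_length_le {l c : List V}
    (hmax : ∀ l'' : List V, l''.Nodup → l''.IsChain G.Adj → l''.length ≤ l.length)
    (hconn : G.Connected) (hne : c ≠ []) (hnd : c.Nodup) (hc : Cycle.Chain G.Adj (c : Cycle V))
    (hlen : l.length ≤ c.length) (v : V) : v ∈ c := by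
  by_contra hv
  obtain ⟨u, hu⟩ := List.exists_mem_of_ne_nil c hne
  obtain ⟨d, -, hd, hd'⟩ := (hconn u v).some.exists_boundary_dart {x | x ∈ c} hu hv
  obtain ⟨t, hrot, hct⟩ := hc.exists_cons_isChain hd
  refine hd' (hrot.perm.mem_iff.mp (mem_of_adj_head_of_length_le hmax ?_ hct ?_ ?_))
  · exact hrot.perm.nodup_iff.mpr hnd
  · exact hlen.trans hrot.perm.length_eq.ge
  · simp [d.adj.symm]

/-- Dirac's theorem. On a longest path the neighbourhoods of the two ends cross, which closes the
path into a cycle on the same vertex set (Pósa's rotation); the cycle cannot miss a vertex, since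
the graph is connected and a vertex adjacent to the cycle would extend it to a longer path. -/
theorem isHamiltonian_of_card_le_two_mul_degree [Fintype V] [DecidableEq V] [DecidableRel G.Adj]
    (h3 : 3 ≤ Fintype.card V) (hdeg : ∀ v, Fintype.card V ≤ 2 * G.degree v) :
    G.IsHamiltonian := by
  have : Nonempty V := Fintype.card_pos_iff.mp (by omega)
  have hconn : G.Connected := ⟨fun u v => reachable_of_card_le_degree_add_degree
    (by have := hdeg u; have := hdeg v; omega)⟩
  have hfin : {l : List V | l.Nodup}.Finite :=
    Set.finite_coe_iff.mp (inferInstanceAs (Finite {l : List V // l.Nodup}))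
  obtain ⟨l, ⟨hnd, hc⟩, hmax⟩ :=
    Set.exists_max_image {l : List V | l.Nodup ∧ l.IsChain G.Adj} List.length
      (hfin.subset fun _ h => h.1) ⟨[], List.nodup_nil, List.isChain_nil⟩
  replace hmax : ∀ l' : List V, l'.Nodup → l'.IsChain G.Adj → l'.length ≤ l.length :=
    fun l' hnd' hc' => hmax l' ⟨hnd', hc'⟩
  have hne : l ≠ [] := by
    rintro rfl
    exact List.not_mem_nil (mem_of_adj_head_of_length_le hmax List.nodup_nil List.isChain_nil
      le_rfl (x := Classical.arbitrary V) (by simp))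
  have ha : ∀ x, G.Adj (l.head hne) x → x ∈ l := fun x hx =>
    mem_of_adj_head_of_length_le hmax hnd hc le_rfl (by simp [List.head?_eq_some_head hne, hx.symm])
  have hb : ∀ x, G.Adj (l.getLast hne) x → x ∈ l := fun x hx => List.mem_reverse.mp <|
    mem_of_adj_head_of_length_le hmax (List.nodup_reverse.mpr hnd)
      (List.isChain_reverse.mpr (hc.imp fun _ _ h => h.symm)) List.length_reverse.ge
      (by simp [List.head?_reverse, List.getLast?_eq_some_getLast hne, hx.symm])
  obtain ⟨i, hi, hai, hbi⟩ := exists_adj_getElem_succ_adj_getElem hne ha hb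
    (by have := hdeg (l.head hne); have := hdeg (l.getLast hne); have := hnd.length_le_card; omega)
  set c := l.take (i + 1) ++ (l.drop (i + 1)).reverse
  have hperm : c.Perm l :=
    ((List.perm_append_left_iff _).mpr (List.reverse_perm _)).trans (by rw [List.take_append_drop])
  have hcyc : Cycle.Chain G.Adj (c : Cycle V) :=
    cycleChain_take_append_reverse_drop hne hc hi hai hbi
  have hspan : ∀ v, v ∈ c := forall_mem_of_cycleChain_of_length_le hmax hconn
    (fun h => hne (h ▸ hperm).nil_eq.symm) (hperm.nodup_iff.mpr hnd) hcyc hperm.length_eq.ge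
  have hlen : Fintype.card V ≤ c.length :=
    (card_le_card fun v _ => List.mem_toFinset.mpr (hspan v)).trans (List.toFinset_card_le c)
  exact isHamiltonian_of_cycleChain (hperm.nodup_iff.mpr hnd) hspan (h3.trans hlen) hcyc

end SimpleGraph

namespace SimpleGraph.Subgraph.IsMatching

variable {V : Type*} {G : SimpleGraph V} {M M' : G.Subgraph}

theorem ncard_verts [Finite V] (hM : M.IsMatching) : M.verts.ncard = 2 * M.edgeSet.ncard := by
  classical
  have := Fintype.ofFinite V
  have hdeg : ∀ v, M.spanningCoe.degree v = if v ∈ M.verts then 1 else 0 := by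
    intro v
    split_ifs with hv
    · rw [degree_spanningCoe]; exact degree_eq_one_iff_existsUnique_adj.mpr (hM hv)
    · rw [degree_eq_zero_iff_notMem_support]
      rintro ⟨w, hw⟩
      exact hv hw.fst_mem
  have := M.spanningCoe.sum_degrees_eq_twice_card_edges
  simp only [hdeg, sum_boole, Nat.cast_id, Set.filter_mem_univ_eq_toFinset] at this
  rw [Set.ncard_eq_toFinset_card', this, ← edgeSet_spanningCoe, ← coe_edgeFinset,
    Set.ncard_coe_finset]

theorem ncard_edgeSet_lt_of_verts_ssubset [Finite V] (hM : M.IsMatching) (hM' : M'.IsMatching)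
    (h : M.verts ⊂ M'.verts) : M.edgeSet.ncard < M'.edgeSet.ncard := by
  have := Set.ncard_lt_ncard h (Set.toFinite _)
  rw [hM.ncard_verts, hM'.ncard_verts] at this
  omega

theorem deleteVerts {s : Set V} (hM : M.IsMatching)
    (hs : ∀ v w, M.Adj v w → v ∈ s → w ∈ s) :
    (M.deleteVerts s).IsMatching := by
  rintro v ⟨hv, hvs⟩
  obtain ⟨w, hvw, huniq⟩ := hM hv
  refine ⟨w, ?_, fun y hy => huniq y hy.2.2⟩
  exact ⟨⟨hv, hvs⟩, ⟨hvw.snd_mem, fun hws => hvs (hs w v hvw.symm hws)⟩, hvw⟩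

theorem sup_subgraphOfAdj {x y : V} (hM : M.IsMatching) (hxy : G.Adj x y) (hx : x ∉ M.verts)
    (hy : y ∉ M.verts) : (M ⊔ G.subgraphOfAdj hxy).IsMatching := by
  refine hM.sup (.subgraphOfAdj hxy) ?_
  rw [hM.support_eq_verts, support_subgraphOfAdj, Set.disjoint_insert_right,
    Set.disjoint_singleton_right]
  exact ⟨hx, hy⟩

theorem exists_verts_ssubset_of_adj {x y : V} (hM : M.IsMatching) (hxy : G.Adj x y)
    (hx : x ∉ M.verts) (hy : y ∉ M.verts) :
    ∃ M' : G.Subgraph, M'.IsMatching ∧ M.verts ⊂ M'.verts :=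
  ⟨_, hM.sup_subgraphOfAdj hxy hx hy,
    (Set.ssubset_iff_of_subset Set.subset_union_left).mpr ⟨x, by simp, hx⟩⟩

theorem exists_verts_ssubset_of_augmenting {u w x y : V} (hM : M.IsMatching) (hxy : M.Adj x y)
    (hux : G.Adj u x) (hwy : G.Adj w y) (hu : u ∉ M.verts) (hw : w ∉ M.verts) (huw : u ≠ w) :
    ∃ M' : G.Subgraph, M'.IsMatching ∧ M.verts ⊂ M'.verts := by
  have hclosed : ∀ v z, M.Adj v z → v ∈ ({x, y} : Set V) → z ∈ ({x, y} : Set V) := by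
    rintro v z hvz (rfl | rfl)
    · exact Or.inr (hM.eq_of_adj_left hvz hxy)
    · exact Or.inl (hM.eq_of_adj_left hvz hxy.symm)
  have h₁ := (hM.deleteVerts hclosed).sup_subgraphOfAdj hux (by simp [hu]) (by simp)
  have hwx : w ≠ x := fun h => hw (h ▸ hxy.fst_mem)
  have hyu : y ≠ u := fun h => hu (h ▸ hxy.snd_mem)
  have h₂ := h₁.sup_subgraphOfAdj hwy (by simp [hw, huw.symm, hwx])
    (by simp [hyu, (M.adj_sub hxy).ne.symm])
  have hsub :
      M.verts ⊆ (M.deleteVerts {x, y} ⊔ G.subgraphOfAdj hux ⊔ G.subgraphOfAdj hwy).verts := by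
    intro v hv
    simp only [verts_sup, deleteVerts_verts, subgraphOfAdj_verts]
    grind
  exact ⟨_, h₂, (Set.ssubset_iff_of_subset hsub).mpr ⟨u, by simp, hu⟩⟩

theorem degree_add_degree_le_ncard_verts [Fintype V] [DecidableRel G.Adj] {u w : V}
    (hM : M.IsMatching) (hmax : ∀ M' : G.Subgraph, M'.IsMatching → ¬ M.verts ⊂ M'.verts)
    (hu : u ∉ M.verts) (hw : w ∉ M.verts) (huw : u ≠ w) :
    G.degree u + G.degree w ≤ M.verts.ncard := by
  classical
  have hnbr : ∀ v ∉ M.verts, ∀ x, G.Adj v x → x ∈ M.verts := fun v hv x hvx => by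
    by_contra hx
    obtain ⟨M', hM', hss⟩ := hM.exists_verts_ssubset_of_adj hvx hv hx
    exact hmax M' hM' hss
  have hw' : G.neighborFinset w ⊆ M.verts.toFinset := fun x hx => by
    simpa using hnbr w hw x (by simpa using hx)
  have hu' : G.degree u ≤ #(M.verts.toFinset \ G.neighborFinset w) := by
    rw [← card_neighborFinset_eq_degree]
    refine card_le_card_of_forall_subsingleton M.Adj (fun x hx => ?_)
      fun y _ x₁ hx₁ x₂ hx₂ => hM.eq_of_adj_right hx₁.2 hx₂.2
    rw [mem_neighborFinset] at hx
    obtain ⟨y, hxy, -⟩ := hM (hnbr u hu x hx)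
    refine ⟨y, ?_, hxy⟩
    simp only [mem_sdiff, Set.mem_toFinset, mem_neighborFinset]
    refine ⟨hxy.snd_mem, fun hwy => ?_⟩
    obtain ⟨M', hM', hss⟩ := hM.exists_verts_ssubset_of_augmenting hxy hx hwy hu hw huw
    exact hmax M' hM' hss
  rw [card_sdiff_of_subset hw', card_neighborFinset_eq_degree] at hu'
  rw [Set.ncard_eq_toFinset_card']
  have := card_le_card hw'
  rw [card_neighborFinset_eq_degree] at this
  omega

end SimpleGraph.Subgraph.IsMatching

namespace SimpleGraph

variable {V : Type*} [Fintype V]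

theorem bddAbove_setOf_ncard_edgeSet_isMatching (G : SimpleGraph V) :
    BddAbove {n | ∃ M : G.Subgraph, M.IsMatching ∧ M.edgeSet.ncard = n} :=
  ⟨Nat.card (Sym2 V), by rintro _ ⟨M, -, rfl⟩; exact Set.ncard_le_card _⟩

theorem Subgraph.IsMatching.ncard_edgeSet_le_matchingNumber {G : SimpleGraph V} {M : G.Subgraph}
    (hM : M.IsMatching) : M.edgeSet.ncard ≤ matchingNumber G :=
  le_csSup G.bddAbove_setOf_ncard_edgeSet_isMatching ⟨M, hM, rfl⟩

theorem exists_isMatching_ncard_edgeSet_eq_matchingNumber (G : SimpleGraph V) :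
    ∃ M : G.Subgraph, M.IsMatching ∧ M.edgeSet.ncard = matchingNumber G := by
  refine Nat.sSup_mem ?_ G.bddAbove_setOf_ncard_edgeSet_isMatching
  exact ⟨0, ⊥, fun _ h => h.elim, by simp⟩

theorem card_le_two_mul_matchingNumber_add_one (G : SimpleGraph V) [DecidableRel G.Adj]
    (hδ : ∀ v, matchingNumber G < G.degree v) : Fintype.card V ≤ 2 * matchingNumber G + 1 := by
  obtain ⟨M, hM, hMm⟩ := G.exists_isMatching_ncard_edgeSet_eq_matchingNumber
  have hmax : ∀ M' : G.Subgraph, M'.IsMatching → ¬ M.verts ⊂ M'.verts := fun M' hM' hss => by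
    have := hM.ncard_edgeSet_lt_of_verts_ssubset hM' hss
    have := hM'.ncard_edgeSet_le_matchingNumber
    omega
  by_contra! h
  have hcompl : 1 < M.vertsᶜ.ncard := by
    have := Set.ncard_add_ncard_compl M.verts
    rw [Nat.card_eq_fintype_card, hM.ncard_verts] at this
    omega
  obtain ⟨u, w, hu, hw, huw⟩ := (Set.one_lt_ncard_iff (Set.toFinite _)).mp hcompl
  have hdeg := hM.degree_add_degree_le_ncard_verts hmax hu hw huw
  rw [hM.ncard_verts] at hdeg
  have := hδ u
  have := hδ w
  omega

theorem vertexConnectivity_le_card_sub_one (G : SimpleGraph V) :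
    vertexConnectivity G ≤ Fintype.card V - 1 := by
  obtain ⟨S, -, hS⟩ :=
    exists_subset_card_eq (show Fintype.card V - 1 ≤ #(univ : Finset V) by simp)
  exact Nat.sInf_le ⟨S, hS, Or.inr (by omega)⟩

theorem vertexConnectivity_le_degree (G : SimpleGraph V) [DecidableRel G.Adj] (v : V) :
    vertexConnectivity G ≤ G.degree v := by
  classical
  refine Nat.sInf_le ⟨G.neighborFinset v, card_neighborFinset_eq_degree G v, ?_⟩
  -- deleting the neighbours of `v` isolates `v`, unless nothing but `v` remains
  by_cases h : ∃ y, y ≠ v ∧ ¬ G.Adj v y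
  · obtain ⟨y, hyv, hvy⟩ := h
    refine Or.inl fun hconn => ?_
    obtain ⟨p⟩ := hconn.preconnected ⟨v, by simp⟩ ⟨y, by simpa using hvy⟩
    cases p with
    | nil => exact hyv rfl
    | @cons _ x _ hadj _ => exact x.2 (by simpa using hadj)
  · push Not at h
    have hsub : (univ : Finset V) ⊆ insert v (G.neighborFinset v) := fun y _ => by
      rcases eq_or_ne y v with rfl | hyv
      · exact mem_insert_self _ _
      · exact mem_insert_of_mem ((mem_neighborFinset _ _ _).mpr (h y hyv))
    have := (card_le_card hsub).trans (card_insert_le _ _)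
    rw [card_univ, card_neighborFinset_eq_degree] at this
    exact Or.inr this

end SimpleGraph

/-- If `κ(G) ≥ 2` and `m(G) < κ(G)` (strict inequality), then `G` is Hamiltonian. -/
theorem stmt_16 {V : Type*} [Fintype V] [DecidableEq V] (G : SimpleGraph V)
    (hκ : 2 ≤ vertexConnectivity G)
    (hm : matchingNumber G < vertexConnectivity G) :
    G.IsHamiltonian := by
  classical
  have hδ : ∀ v, matchingNumber G < G.degree v := fun v =>
    hm.trans_le (G.vertexConnectivity_le_degree v)
  have hn := G.card_le_two_mul_matchingNumber_add_one hδ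
  have hκn := G.vertexConnectivity_le_card_sub_one
  refine G.isHamiltonian_of_card_le_two_mul_degree (by omega) fun v => ?_
  have := hδ v
  omega
end
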